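/- For any integer r and m ≥ 2, the map X : ∂B_eff → U(m) equal to diag(e^{-2πir(k₂+1/2)}, e^{-2πir(k₂+1/2)}, 1, …, 1) on the edge {1/2}×[-1/2,1/2] and the identity elsewhere on the boundary, is continuous, satisfies the symmetry conditions X(k+λ) = X(k) and X(-k+λ)ᵀ J X(k) = J (with J the standard symplectic matrix), and has degree -2r. -/
import Mathlib


open Complex Matrix Set

/-- The boundary of the effective unit cell `B_eff = [0,1/2] × [-1/2,1/2]`. -/
def effBoundary : Set (ℝ × ℝ) :=
  {p | ((p.1 = 0 ∨ p.1 = 1/2) ∧ p.2 ∈ Icc (-1/2 : ℝ) (1/2)) ∨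
       ((p.2 = -1/2 ∨ p.2 = 1/2) ∧ p.1 ∈ Icc (0 : ℝ) (1/2))}

/-- A counterclockwise parametrization of `∂B_eff`, for `t ∈ [0,1]`. -/
noncomputable def effLoop (t : ℝ) : ℝ × ℝ :=
  if t ≤ 1/4 then (2*t, -1/2)
  else if t ≤ 1/2 then (1/2, -1/2 + 4*(t - 1/4))
  else if t ≤ 3/4 then (1/2 - 2*(t - 1/2), 1/2)
  else (0, 1/2 - 4*(t - 3/4))

/-- The embedding of the lattice `ℤ² ⊂ ℝ²`. -/
def latt (n : ℤ × ℤ) : ℝ × ℝ := ((n.1 : ℝ), (n.2 : ℝ))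

/-- The standard symplectic form on `ℂ^m` (`m` even): block-diagonal with copies of
`[[0, 1], [-1, 0]]`. -/
def stdJ (m : ℕ) : Matrix (Fin m) (Fin m) ℂ := fun i j =>
  if j.val = i.val + 1 ∧ i.val % 2 = 0 then 1
  else if i.val = j.val + 1 ∧ j.val % 2 = 0 then -1
  else 0

/-- The unwinding map: `diag(e^{-2πir(k₂+1/2)}, e^{-2πir(k₂+1/2)}, 1, …, 1)` on the edge
`{1/2} × [-1/2,1/2]`, and the identity elsewhere. -/
noncomputable def unwindX (m : ℕ) (r : ℤ) (k : ℝ × ℝ) : Matrix (Fin m) (Fin m) ℂ :=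
  if k.1 = 1/2 then
    Matrix.diagonal (fun i : Fin m => if (i : ℕ) < 2 then
      Complex.exp (-(2 * (Real.pi : ℂ) * Complex.I * (r : ℂ) * ((k.2 : ℂ) + 1/2))) else 1)
  else 1

noncomputable def phaseC (r : ℤ) (c : ℝ) : ℂ :=
  Complex.exp (-(2 * (Real.pi : ℂ) * Complex.I * (r : ℂ) * ((c : ℂ) + 1/2)))

lemma unwindX_of_fst (m : ℕ) (r : ℤ) (k : ℝ × ℝ) (h : k.1 = 1/2) :
    unwindX m r k = Matrix.diagonal (fun i : Fin m => if (i : ℕ) < 2 then phaseC r k.2 else 1) := by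
  rw [unwindX, if_pos h]; rfl

lemma unwindX_of_ne (m : ℕ) (r : ℤ) (k : ℝ × ℝ) (h : k.1 ≠ 1/2) :
    unwindX m r k = 1 := by
  rw [unwindX, if_neg h]

lemma effBoundary_bounds {p : ℝ × ℝ} (hp : p ∈ effBoundary) :
    (0 ≤ p.1 ∧ p.1 ≤ 1/2) ∧ (-(1/2) ≤ p.2 ∧ p.2 ≤ 1/2) := by
  rcases hp with ⟨h1, h2, h3⟩ | ⟨h1, h2, h3⟩
  · rcases h1 with h | h <;> constructor <;> constructor <;> simp [h] at * <;> linarith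
  · rcases h1 with h | h <;> constructor <;> constructor <;> simp [h] at * <;> linarith

lemma phaseC_eval_top (r : ℤ) {c : ℝ} (hc : c = 1/2 ∨ c = -(1/2)) : phaseC r c = 1 := by
  rcases hc with h | h <;> subst h
  · rw [phaseC]
    have h : (-(2 * (Real.pi : ℂ) * Complex.I * (r : ℂ) * (((1/2 : ℝ) : ℂ) + 1/2)))
        = ((-r : ℤ) : ℂ) * (2 * (Real.pi : ℂ) * Complex.I) := by push_cast; ring
    rw [h, Complex.exp_int_mul_two_pi_mul_I]
  · rw [phaseC]; norm_num

lemma det_unwindX (m : ℕ) (r : ℤ) (hm2 : 2 ≤ m) (k : ℝ × ℝ) :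
    (unwindX m r k).det = if k.1 = 1/2 then phaseC r k.2 ^ 2 else 1 := by
  by_cases h : k.1 = 1/2
  · rw [unwindX_of_fst m r k h, if_pos h, Matrix.det_diagonal]
    rw [Finset.prod_ite, Finset.prod_const, Finset.prod_const_one, mul_one]
    have hf : Finset.univ.filter (fun i : Fin m => (i : ℕ) < 2)
        = {(⟨0, by omega⟩ : Fin m), ⟨1, by omega⟩} := by
      ext i
      simp [Finset.mem_filter, Fin.ext_iff]
      omega
    rw [hf, Finset.card_pair (by simp [Fin.ext_iff])]
  · rw [unwindX_of_ne m r k h, if_neg h, Matrix.det_one]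

lemma phaseC_mul_star (r : ℤ) (c : ℝ) : phaseC r c * star (phaseC r c) = 1 := by
  rw [phaseC, Complex.star_def, ← Complex.exp_conj, ← Complex.exp_add]
  have h : (starRingEnd ℂ) (-(2 * (Real.pi : ℂ) * Complex.I * (r : ℂ) * ((c : ℂ) + 1/2)))
      = 2 * (Real.pi : ℂ) * Complex.I * (r : ℂ) * ((c : ℂ) + 1/2) := by
    simp only [map_neg, _root_.map_mul, map_add, Complex.conj_ofReal, Complex.conj_I,
      map_intCast, map_ofNat, map_div₀, _root_.map_one]
    ring
  rw [h]
  ring_nf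
  exact Complex.exp_zero

lemma phaseC_mul_phaseC (r : ℤ) (c : ℝ) (n : ℤ) :
    phaseC r c * phaseC r (-c + n) = 1 := by
  rw [phaseC, phaseC, ← Complex.exp_add]
  have h : (-(2 * (Real.pi : ℂ) * Complex.I * (r : ℂ) * ((c : ℂ) + 1/2)))
      + (-(2 * (Real.pi : ℂ) * Complex.I * (r : ℂ) * (((-c + n : ℝ) : ℂ) + 1/2)))
      = ((-(r * (n + 1)) : ℤ) : ℂ) * (2 * (Real.pi : ℂ) * Complex.I) := by
    push_cast; ring
  rw [h, Complex.exp_int_mul_two_pi_mul_I]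

lemma phaseC_add_int (r : ℤ) (c : ℝ) (n : ℤ) : phaseC r (c + n) = phaseC r c := by
  rw [phaseC, phaseC]
  have h : (-(2 * (Real.pi : ℂ) * Complex.I * (r : ℂ) * (((c + n : ℝ) : ℂ) + 1/2)))
      = (-(2 * (Real.pi : ℂ) * Complex.I * (r : ℂ) * ((c : ℂ) + 1/2)))
      + ((-(r * n) : ℤ) : ℂ) * (2 * (Real.pi : ℂ) * Complex.I) := by
    push_cast; ring
  rw [h, Complex.exp_add, Complex.exp_int_mul_two_pi_mul_I, mul_one]

lemma phaseC_neg_half (r : ℤ) : phaseC r (-(1/2)) = 1 := by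
  rw [phaseC]
  norm_num

lemma phaseC_half (r : ℤ) : phaseC r (1/2) = 1 := by
  rw [phaseC]
  have h : (-(2 * (Real.pi : ℂ) * Complex.I * (r : ℂ) * (((1/2 : ℝ) : ℂ) + 1/2)))
      = ((-r : ℤ) : ℂ) * (2 * (Real.pi : ℂ) * Complex.I) := by push_cast; ring
  rw [h, Complex.exp_int_mul_two_pi_mul_I]


noncomputable def phi (r : ℤ) (t : ℝ) : ℝ := -2*(r:ℝ)*(max 0 (min (4*t-1) 1))

lemma phaseC_sq (r : ℤ) (c : ℝ) :
    phaseC r c ^ 2 = Complex.exp (2 * (Real.pi : ℂ) * Complex.I * ((-2*(r:ℝ)*(c+1/2) : ℝ) : ℂ)) := by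
  rw [phaseC, ← Complex.exp_nat_mul]
  congr 1
  push_cast; ring

lemma exp_phi_top (r : ℤ) : Complex.exp (2 * (Real.pi : ℂ) * Complex.I * ((-2*(r:ℝ) : ℝ) : ℂ)) = 1 := by
  have h : 2 * (Real.pi : ℂ) * Complex.I * ((-2*(r:ℝ) : ℝ) : ℂ)
      = ((-(2*r) : ℤ) : ℂ) * (2 * (Real.pi : ℂ) * Complex.I) := by push_cast; ring
  rw [h, Complex.exp_int_mul_two_pi_mul_I]

lemma det_loop (m : ℕ) (r : ℤ) (hm2 : 2 ≤ m) (t : ℝ) :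
    (unwindX m r (effLoop t)).det
      = Complex.exp (2 * (Real.pi : ℂ) * Complex.I * ((phi r t : ℝ) : ℂ)) := by
  rw [det_unwindX m r hm2]
  rcases le_or_gt t (1/4) with h1 | h1
  · have he : effLoop t = (2*t, -(1/2)) := by rw [effLoop, if_pos h1]; norm_num
    rw [he]
    by_cases h : (2*t : ℝ) = 1/2
    · rw [if_pos h]
      have ht : t = 1/4 := by linarith
      have hφ : phi r t = 0 := by rw [phi, ht]; norm_num
      rw [hφ, phaseC_eval_top r (Or.inr rfl)]
      norm_num
    · rw [if_neg h]
      have ht : t < 1/4 := lt_of_le_of_ne h1 (fun hc => h (by rw [hc]; norm_num))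
      have hφ : phi r t = 0 := by
        rw [phi, min_eq_left (by linarith), max_eq_left (by linarith)]; ring
      rw [hφ]; norm_num
  · rcases le_or_gt t (1/2) with h2 | h2
    · have he : effLoop t = (1/2, -1/2 + 4*(t - 1/4)) := by
        rw [effLoop, if_neg (by linarith), if_pos h2]
      rw [he, if_pos rfl, phaseC_sq]
      have hφ : phi r t = -2*(r:ℝ)*((-1/2 + 4*(t - 1/4)) + 1/2) := by
        rw [phi, min_eq_left (by linarith), max_eq_right (by linarith)]; ring
      rw [hφ]
    · rcases le_or_gt t (3/4) with h3 | h3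
      · have he : effLoop t = (1/2 - 2*(t - 1/2), 1/2) := by
          rw [effLoop, if_neg (by linarith), if_neg (by linarith), if_pos h3]
        rw [he, if_neg (by simp; intro hc; linarith)]
        have hφ : phi r t = -2*(r:ℝ) := by
          rw [phi, min_eq_right (by linarith), max_eq_right (by norm_num)]; ring
        rw [hφ, exp_phi_top]
      · have he : effLoop t = (0, 1/2 - 4*(t - 3/4)) := by
          rw [effLoop, if_neg (by linarith), if_neg (by linarith), if_neg (by linarith)]
        rw [he, if_neg (by norm_num)]
        have hφ : phi r t = -2*(r:ℝ) := by
          rw [phi, min_eq_right (by linarith), max_eq_right (by norm_num)]; ring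
        rw [hφ, exp_phi_top]

lemma phi_continuous (r : ℤ) : Continuous (phi r) := by
  unfold phi; fun_prop

lemma phi_zero (r : ℤ) : phi r 0 = 0 := by rw [phi]; norm_num
lemma phi_one (r : ℤ) : phi r 1 = -2*(r:ℝ) := by
  rw [phi, min_eq_right (by norm_num), max_eq_right (by norm_num)]; ring

lemma degree_part (m : ℕ) (r : ℤ) (hm2 : 2 ≤ m) (θ : ℝ → ℝ)
    (hθ : ContinuousOn θ (Icc 0 1))
    (hd : ∀ t ∈ Icc (0:ℝ) 1,
      (unwindX m r (effLoop t)).det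
        = Complex.exp (2 * (Real.pi : ℂ) * Complex.I * ((θ t : ℝ) : ℂ))) :
    θ 1 - θ 0 = -(2 * (r:ℝ)) := by
  set g : ℝ → ℝ := fun t => θ t - phi r t with hg
  have hgcont : ContinuousOn g (Icc 0 1) := hθ.sub (phi_continuous r).continuousOn
  have h2πI : (2 * (Real.pi : ℂ) * Complex.I) ≠ 0 := by
    simp [Real.pi_ne_zero, Complex.I_ne_zero, Complex.ofReal_ne_zero]
  have hInt : ∀ t ∈ Icc (0:ℝ) 1, ∃ n : ℤ, g t = n := by
    intro t ht
    have h1 := (hd t ht).symm.trans (det_loop m r hm2 t)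
    obtain ⟨n, hn⟩ := Complex.exp_eq_exp_iff_exists_int.mp h1
    refine ⟨n, ?_⟩
    have h0 : (2 * (Real.pi : ℂ) * Complex.I) * (((θ t : ℝ) : ℂ) - ((phi r t : ℝ) : ℂ) - n) = 0 := by
      linear_combination hn
    rcases mul_eq_zero.mp h0 with h | h
    · exact absurd h h2πI
    · have h2 : ((θ t : ℝ) : ℂ) - ((phi r t : ℝ) : ℂ) = (n : ℂ) := by linear_combination h
      have h3 : ((g t : ℝ) : ℂ) = (n : ℂ) := by rw [hg]; push_cast; exact h2
      exact_mod_cast h3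
  obtain ⟨n0, hn0⟩ := hInt 0 (by norm_num)
  obtain ⟨n1, hn1⟩ := hInt 1 (by norm_num)
  have hkey : ∀ (a b : ℤ), g 0 = a → g 1 = b → a < b → False := by
    intro a b ha hb hab
    have hmem : (a : ℝ) + 1/2 ∈ Icc (g 0) (g 1) := by
      constructor
      · rw [ha]; linarith
      · rw [hb]
        have : (a : ℝ) + 1 ≤ b := by exact_mod_cast hab
        linarith
    obtain ⟨t, ht, hgt⟩ := intermediate_value_Icc (by norm_num : (0:ℝ) ≤ 1) hgcont hmem
    obtain ⟨n, hn⟩ := hInt t ht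
    rw [hn] at hgt
    have h2 : (2*n : ℝ) = 2*a + 1 := by linarith
    have h3 : (2*n : ℤ) = 2*a + 1 := by exact_mod_cast h2
    omega
  have hkey' : ∀ (a b : ℤ), g 0 = a → g 1 = b → b < a → False := by
    intro a b ha hb hab
    have hmem : (b : ℝ) + 1/2 ∈ Icc (g 1) (g 0) := by
      constructor
      · rw [hb]; linarith
      · rw [ha]
        have : (b : ℝ) + 1 ≤ a := by exact_mod_cast hab
        linarith
    obtain ⟨t, ht, hgt⟩ := intermediate_value_Icc' (by norm_num : (0:ℝ) ≤ 1) hgcont hmem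
    obtain ⟨n, hn⟩ := hInt t ht
    rw [hn] at hgt
    have h2 : (2*n : ℝ) = 2*b + 1 := by linarith
    have h3 : (2*n : ℤ) = 2*b + 1 := by exact_mod_cast h2
    omega
  have heq : n0 = n1 := by
    rcases lt_trichotomy n0 n1 with h | h | h
    · exact absurd (hkey n0 n1 hn0 hn1 h) (not_false)
    · exact h
    · exact absurd (hkey' n0 n1 hn0 hn1 h) (not_false)
  have e0 : g 0 = θ 0 - phi r 0 := rfl
  have e1 : g 1 = θ 1 - phi r 1 := rfl
  have := phi_zero r
  have := phi_one r
  have : θ 1 - θ 0 = (g 1 - g 0) + (phi r 1 - phi r 0) := by rw [e0, e1]; ring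
  rw [this, hn0, hn1, heq, phi_zero, phi_one]
  ring

lemma F_continuous (m : ℕ) (r : ℤ) :
    Continuous (fun k : ℝ × ℝ =>
      Matrix.diagonal (fun i : Fin m => if (i : ℕ) < 2 then phaseC r k.2 else 1)) := by
  apply Continuous.matrix_diagonal
  apply continuous_pi
  intro i
  by_cases h : (i : ℕ) < 2
  · simp only [if_pos h]
    unfold phaseC
    exact Complex.continuous_exp.comp (by fun_prop)
  · simp only [if_neg h]
    exact continuous_const

lemma cont_part (m : ℕ) (r : ℤ) : ContinuousOn (unwindX m r) effBoundary := by
  intro p hp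
  by_cases hp1 : p.1 = 1/2
  · have hF := ((F_continuous m r).continuousAt
      (x := p)).continuousWithinAt (s := effBoundary)
    apply hF.congr_of_eventuallyEq
    · have hU : {k : ℝ × ℝ | 1/4 < k.1} ∈ nhds p := by
        apply IsOpen.mem_nhds
        · exact isOpen_lt continuous_const continuous_fst
        · simp only [Set.mem_setOf_eq, hp1]; norm_num
      filter_upwards [self_mem_nhdsWithin, mem_nhdsWithin_of_mem_nhds hU] with k hk hk4
      by_cases h : k.1 = 1/2
      · rw [unwindX_of_fst m r k h]
      · rw [unwindX_of_ne m r k h]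
        have h2 : k.2 = 1/2 ∨ k.2 = -(1/2) := by
          rcases hk with ⟨h1, _⟩ | ⟨h1, _⟩
          · rcases h1 with h1 | h1
            · exfalso; rw [h1] at hk4; norm_num at hk4
            · exact absurd h1 h
          · rcases h1 with h1 | h1
            · right; rw [h1]; norm_num
            · left; exact h1
        have h3 : phaseC r k.2 = 1 := phaseC_eval_top r h2
        rw [h3]
        have he : (fun i : Fin m => if (i:ℕ) < 2 then (1:ℂ) else 1) = fun _ => 1 := by
          funext i; split <;> rfl
        rw [he, Matrix.diagonal_one]
    · rw [unwindX_of_fst m r p hp1]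
  · apply ContinuousWithinAt.congr_of_eventuallyEq
      (continuousWithinAt_const (b := (1 : Matrix (Fin m) (Fin m) ℂ)))
    · have hU : {k : ℝ × ℝ | k.1 ≠ 1/2} ∈ nhds p := by
        apply IsOpen.mem_nhds
        · exact isOpen_ne_fun continuous_fst continuous_const
        · exact hp1
      filter_upwards [mem_nhdsWithin_of_mem_nhds hU] with k hk
      exact unwindX_of_ne m r k hk
    · exact unwindX_of_ne m r p hp1

lemma unitary_part (m : ℕ) (r : ℤ) : ∀ k ∈ effBoundary,
    unwindX m r k ∈ Matrix.unitaryGroup (Fin m) ℂ := by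
  intro k hk
  by_cases h : k.1 = 1/2
  · rw [unwindX_of_fst m r k h, Matrix.mem_unitaryGroup_iff,
      Matrix.star_eq_conjTranspose, Matrix.diagonal_conjTranspose,
      Matrix.diagonal_mul_diagonal]
    have he : (fun i : Fin m => (if (i:ℕ) < 2 then phaseC r k.2 else 1)
        * star (if (i:ℕ) < 2 then phaseC r k.2 else 1)) = fun _ => 1 := by
      funext i
      by_cases h0 : (i:ℕ) < 2
      · rw [if_pos h0]; exact phaseC_mul_star r k.2
      · rw [if_neg h0]; simp
    calc Matrix.diagonal (fun i : Fin m => (if (i:ℕ) < 2 then phaseC r k.2 else 1)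
          * star (fun i : Fin m => if (i:ℕ) < 2 then phaseC r k.2 else 1) i)
        = Matrix.diagonal (fun _ : Fin m => (1:ℂ)) := by rw [show (fun i : Fin m => (if (i:ℕ) < 2 then phaseC r k.2 else 1)
          * star (fun i : Fin m => if (i:ℕ) < 2 then phaseC r k.2 else 1) i) = fun _ => 1 from he]
      _ = 1 := Matrix.diagonal_one
  · rw [unwindX_of_ne m r k h]
    exact Submonoid.one_mem _

lemma trans_part (m : ℕ) (r : ℤ) : ∀ k ∈ effBoundary, ∀ n, k + latt n ∈ effBoundary →
    unwindX m r (k + latt n) = unwindX m r k := by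
  intro k hk n hkn
  obtain ⟨⟨hk1a, hk1b⟩, _⟩ := effBoundary_bounds hk
  obtain ⟨⟨hn1a, hn1b⟩, _⟩ := effBoundary_bounds hkn
  have hadd1 : (k + latt n).1 = k.1 + (n.1 : ℝ) := rfl
  have hsnd : (k + latt n).2 = k.2 + (n.2 : ℝ) := rfl
  have hn1 : n.1 = 0 := by
    rw [hadd1] at hn1a hn1b
    have h1 : (n.1:ℝ) ≤ 1/2 := by linarith
    have h2 : (-1:ℝ) < (n.1:ℝ) := by linarith
    have h1' : (n.1:ℝ) < 1 := by linarith
    have h3 : n.1 < 1 := by exact_mod_cast h1'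
    have h4 : -1 < n.1 := by exact_mod_cast h2
    omega
  have hfst : (k + latt n).1 = k.1 := by rw [hadd1, hn1]; norm_num
  by_cases h : k.1 = 1/2
  · rw [unwindX_of_fst m r _ (by rw [hfst]; exact h), unwindX_of_fst m r k h]
    rw [hsnd, phaseC_add_int]
  · rw [unwindX_of_ne m r _ (by rw [hfst]; exact h), unwindX_of_ne m r k h]

lemma symp_part (m : ℕ) (r : ℤ) : ∀ k ∈ effBoundary, ∀ n, -k + latt n ∈ effBoundary →
    (unwindX m r (-k + latt n))ᵀ * stdJ m * unwindX m r k = stdJ m := by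
  intro k hk n hkn
  obtain ⟨⟨hk1a, hk1b⟩, _⟩ := effBoundary_bounds hk
  obtain ⟨⟨hn1a, hn1b⟩, _⟩ := effBoundary_bounds hkn
  have hfst : (-k + latt n).1 = -k.1 + (n.1 : ℝ) := rfl
  have hsnd : (-k + latt n).2 = -k.2 + (n.2 : ℝ) := rfl
  by_cases h : k.1 = 1/2
  · have hfst2 : (-k + latt n).1 = 1/2 := by
      rw [hfst] at hn1a hn1b ⊢
      rw [h] at hn1a hn1b
      have h1 : (1/2:ℝ) ≤ (n.1:ℝ) := by linarith
      have h2 : (n.1:ℝ) ≤ 1 := by linarith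
      have h1' : (0:ℝ) < (n.1:ℝ) := by linarith
      have h3 : 0 < n.1 := by exact_mod_cast h1'
      have h4 : n.1 ≤ 1 := by exact_mod_cast h2
      have : n.1 = 1 := by omega
      rw [h, this]; norm_num
    rw [unwindX_of_fst m r _ hfst2, unwindX_of_fst m r k h, Matrix.diagonal_transpose]
    ext i j
    rw [Matrix.mul_diagonal, Matrix.diagonal_mul]
    by_cases h1 : (j:ℕ) = (i:ℕ) + 1 ∧ (i:ℕ) % 2 = 0
    · have hJ : stdJ m i j = 1 := by rw [stdJ]; exact if_pos h1
      rw [hJ, mul_one]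
      by_cases h0 : (i:ℕ) < 2
      · have hi0 : (i:ℕ) = 0 := by omega
        have hj : (j:ℕ) < 2 := by omega
        rw [if_pos h0, if_pos hj, hsnd, mul_comm]
        exact phaseC_mul_phaseC r k.2 n.2
      · have hj : ¬ (j:ℕ) < 2 := by omega
        rw [if_neg h0, if_neg hj, mul_one]
    · by_cases h2 : (i:ℕ) = (j:ℕ) + 1 ∧ (j:ℕ) % 2 = 0
      · have hJ : stdJ m i j = -1 := by rw [stdJ, if_neg h1]; exact if_pos h2
        rw [hJ]
        have hkey : (if (i:ℕ) < 2 then phaseC r (-k + latt n).2 else 1)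
            * (if (j:ℕ) < 2 then phaseC r k.2 else 1) = 1 := by
          by_cases h0 : (j:ℕ) < 2
          · have hj0 : (j:ℕ) = 0 := by omega
            have hi : (i:ℕ) < 2 := by omega
            rw [if_pos h0, if_pos hi, hsnd, mul_comm]
            exact phaseC_mul_phaseC r k.2 n.2
          · have hi : ¬ (i:ℕ) < 2 := by omega
            rw [if_neg h0, if_neg hi, mul_one]
        calc (if (i:ℕ) < 2 then phaseC r (-k + latt n).2 else 1) * (-1)
              * (if (j:ℕ) < 2 then phaseC r k.2 else 1)
            = -((if (i:ℕ) < 2 then phaseC r (-k + latt n).2 else 1)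
              * (if (j:ℕ) < 2 then phaseC r k.2 else 1)) := by ring
          _ = -1 := by rw [hkey]
      · have hJ : stdJ m i j = 0 := by rw [stdJ, if_neg h1]; exact if_neg h2
        rw [hJ, mul_zero, zero_mul]
  · have hne : (-k + latt n).1 ≠ 1/2 := by
      rw [hfst]
      intro hc
      have he : (n.1:ℝ) = 1/2 + k.1 := by linarith
      have h1 : (0:ℝ) < (n.1:ℝ) := by rw [he]; linarith
      have h2 : (n.1:ℝ) < 1 := by
        rw [he]
        have : k.1 < 1/2 := lt_of_le_of_ne hk1b h
        linarith
      have h1' : 0 < n.1 := by exact_mod_cast h1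
      have h2' : n.1 < 1 := by exact_mod_cast h2
      omega
    rw [unwindX_of_ne m r _ hne, unwindX_of_ne m r k h, Matrix.transpose_one, one_mul, mul_one]

/-- For any integer `r` and even `m ≥ 2`, the map `unwindX m r : ∂B_eff → U(m)` is
continuous, satisfies the symmetry conditions `X(k+λ) = X(k)` and
`X(-k+λ)ᵀ J X(k) = J`, and has degree `-2r`: any continuous phase lift `θ` of
`det ∘ X ∘ effLoop` satisfies `θ 1 - θ 0 = -2r`. -/
theorem unwindX_continuous_symmetric_deg_neg_two_r (m : ℕ) (hm : Even m) (hm2 : 2 ≤ m)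
    (r : ℤ) :
    ContinuousOn (unwindX m r) effBoundary ∧
    (∀ k ∈ effBoundary, unwindX m r k ∈ Matrix.unitaryGroup (Fin m) ℂ) ∧
    (∀ k ∈ effBoundary, ∀ n, k + latt n ∈ effBoundary →
      unwindX m r (k + latt n) = unwindX m r k) ∧
    (∀ k ∈ effBoundary, ∀ n, -k + latt n ∈ effBoundary →
      (unwindX m r (-k + latt n))ᵀ * stdJ m * unwindX m r k = stdJ m) ∧
    (∀ θ : ℝ → ℝ, ContinuousOn θ (Icc 0 1) →
      (∀ t ∈ Icc (0:ℝ) 1,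
        (unwindX m r (effLoop t)).det
          = Complex.exp (2 * (Real.pi : ℂ) * Complex.I * (θ t : ℂ))) →
      θ 1 - θ 0 = -(2 * r)) := by
  refine ⟨cont_part m r, unitary_part m r, trans_part m r, symp_part m r, ?_⟩
  intro θ hθ hd
  exact degree_part m r hm2 θ hθ hd
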